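/- arXiv:2304.00239 — 2 statements merged into one kernel-verified Lean document; each statement's English description precedes it below -/
import Mathlib

section
/- (Hille–Yosida semigroup uniqueness) Let A be a maximal monotone operator on a Hilbert space L. Then for every u₀ ∈ Dom(A) there is a unique u ∈ C¹(ℝ₊, L) ∩ C⁰(ℝ₊, Dom(A)) solving u'(t) + A u(t) = 0, u(0) = u₀; moreover u(t) = S(t)u₀ for a semigroup of contractions (S(t))_{t≥0}. -/
open Set NormedSpace Filter Topology

set_option linter.unusedSectionVars false
set_option maxHeartbeats 1000000
set_option synthInstance.maxHeartbeats 1000000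

namespace HY

variable {L : Type*} [NormedAddCommGroup L] [InnerProductSpace ℝ L] [CompleteSpace L]
variable {D : Submodule ℝ L} {A : D →ₗ[ℝ] L}

local notation "⟪" x ", " y "⟫" => @inner ℝ _ _ x y

/-- key monotonicity estimate -/
lemma norm_le_of_eq (hmono : ∀ u : D, 0 ≤ ⟪A u, (u : L)⟫) {lam : ℝ} (hl : 0 ≤ lam)
    (w : D) (g : L) (h : (w : L) + lam • A w = g) : ‖(w : L)‖ ≤ ‖g‖ := by
  have h1 : ‖(w:L)‖ ^ 2 ≤ ⟪g, (w:L)⟫ := by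
    rw [← h, inner_add_left, real_inner_smul_left, real_inner_self_eq_norm_sq]
    nlinarith [hmono w, real_inner_comm (A w) (w : L)]
  have h2 : ⟪g, (w:L)⟫ ≤ ‖g‖ * ‖(w:L)‖ := real_inner_le_norm _ _
  nlinarith [norm_nonneg (w:L), norm_nonneg g]

lemma res_uniq (hmono : ∀ u : D, 0 ≤ ⟪A u, (u : L)⟫) {lam : ℝ} (hl : 0 ≤ lam)
    {u v : D} (h : (u : L) + lam • A u = (v : L) + lam • A v) : u = v := by
  have h0 : ((u - v : D) : L) + lam • A (u - v) = 0 := by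
    push_cast [map_sub, smul_sub]
    rw [show (0:L) = (↑u + lam • A u) - (↑v + lam • A v) by rw [h]; abel]
    abel
  have := norm_le_of_eq hmono hl (u - v) 0 h0
  simp only [norm_zero] at this
  have : ((u - v : D) : L) = 0 := by
    have := norm_nonneg ((u - v : D) : L); have : ‖((u-v:D):L)‖ = 0 := le_antisymm ‹_› ‹_›
    simpa using this
  have : (u - v : D) = 0 := Subtype.ext (by simpa using this)
  exact sub_eq_zero.mp this


def Res (D : Submodule ℝ L) (A : D →ₗ[ℝ] L) (lam : ℝ) : Prop :=
  ∀ f : L, ∃ u : D, (u : L) + lam • A u = f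

lemma res_step (hmono : ∀ u : D, 0 ≤ ⟪A u, (u : L)⟫) {lam₀ lam : ℝ} (h0 : 0 < lam₀)
    (hR : Res D A lam₀) (hhalf : lam₀ / 2 < lam) (hpos : 0 < lam) : Res D A lam := by
  intro f
  set c : ℝ := 1 - lam₀ / lam with hc
  have hc1 : |c| < 1 := by
    rw [abs_lt]
    constructor
    · have : lam₀ / lam < 2 := by rw [div_lt_iff₀ hpos]; linarith
      simp only [hc]; linarith
    · have : 0 < lam₀ / lam := div_pos h0 hpos
      simp only [hc]; linarith
  -- the contraction map
  set Φ : L → L := fun z => ((hR ((lam₀ / lam) • f + c • z)).choose : L) with hΦ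
  have hΦeq : ∀ z : L, ∃ hu : Φ z ∈ D,
      Φ z + lam₀ • A ⟨Φ z, hu⟩ = (lam₀ / lam) • f + c • z := by
    intro z
    exact ⟨((hR ((lam₀ / lam) • f + c • z)).choose).2, (hR _).choose_spec⟩
  have hlip : LipschitzWith (Real.toNNReal |c|) Φ := by
    apply LipschitzWith.of_dist_le_mul
    intro z z'
    obtain ⟨hu, hequ⟩ := hΦeq z
    obtain ⟨hv, heqv⟩ := hΦeq z'
    have hw : ((⟨Φ z, hu⟩ - ⟨Φ z', hv⟩ : D) : L) + lam₀ • A (⟨Φ z, hu⟩ - ⟨Φ z', hv⟩ : D)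
        = c • (z - z') := by
      push_cast [map_sub, smul_sub, smul_sub]
      rw [show c • z - c • z' = ((lam₀/lam) • f + c • z) - ((lam₀/lam) • f + c • z') by abel]
      rw [← hequ, ← heqv]; abel
    have := norm_le_of_eq hmono h0.le _ _ hw
    simp only [Submodule.coe_sub] at this
    rw [dist_eq_norm, dist_eq_norm]
    calc ‖Φ z - Φ z'‖ ≤ ‖c • (z - z')‖ := this
      _ = |c| * ‖z - z'‖ := by rw [norm_smul, Real.norm_eq_abs]
      _ = (Real.toNNReal |c|) * ‖z - z'‖ := by rw [Real.coe_toNNReal _ (abs_nonneg c)]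
  have hcontr : ContractingWith (Real.toNNReal |c|) Φ :=
    ⟨by simpa [← NNReal.coe_lt_coe, Real.coe_toNNReal _ (abs_nonneg c)] using hc1, hlip⟩
  obtain ⟨z, hz⟩ := hcontr.exists_fixedPoint (0 : L) (edist_ne_top _ _)
  have hzfix : Φ z = z := hz.1
  obtain ⟨hu, hequ⟩ := hΦeq z
  refine ⟨⟨Φ z, hu⟩, ?_⟩
  have hln0 : lam ≠ 0 := ne_of_gt hpos
  have hl0n : lam₀ ≠ 0 := ne_of_gt h0
  have h1 : lam₀ • A (⟨Φ z, hu⟩ : D) = (lam₀ / lam) • (f - Φ z) := by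
    have hcz : c • z = Φ z - (lam₀ / lam) • Φ z := by
      rw [hzfix, hc, sub_smul, one_smul]
    have h3 : lam₀ • A (⟨Φ z, hu⟩ : D) = (lam₀ / lam) • f + c • z - Φ z := by
      rw [← hequ]; abel
    rw [smul_sub, h3, hcz]; abel
  have h2 : lam • A (⟨Φ z, hu⟩ : D) = f - Φ z := by
    have h4 := congrArg (fun w => (lam / lam₀) • w) h1
    simp only [smul_smul] at h4
    rw [show lam / lam₀ * lam₀ = lam by field_simp, show lam / lam₀ * (lam₀ / lam) = 1 by
      field_simp] at h4
    simpa using h4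
  rw [h2]; abel

lemma res_all (hmono : ∀ u : D, 0 ≤ ⟪A u, (u : L)⟫)
    (hmax : ∀ f : L, ∃ u : D, A u + (u : L) = f) {lam : ℝ} (hpos : 0 < lam) :
    Res D A lam := by
  have hres1 : Res D A 1 := by
    intro f; obtain ⟨u, hu⟩ := hmax f; exact ⟨u, by rw [one_smul, add_comm]; exact hu⟩
  have key : ∀ n : ℕ, ∀ μ : ℝ, (1:ℝ) / 2 ^ n < μ → Res D A μ := by
    intro n
    induction n with
    | zero => intro μ hμ; simp at hμ
              exact res_step hmono one_pos hres1 (by linarith) (by linarith)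
    | succ n ih =>
      intro μ hμ
      have hp : (0:ℝ) < 1 / 2 ^ n := by positivity
      have hμpos : 0 < μ := lt_trans (by positivity) hμ
      have h2μ : (1:ℝ) / 2 ^ n < 2 * μ := by
        rw [pow_succ] at hμ
        have : (1:ℝ) / (2 ^ n * 2) < μ := hμ
        calc (1:ℝ)/2^n = 2 * (1 / (2^n * 2)) := by field_simp
          _ < 2 * μ := by linarith
      set μ₀ := ((1:ℝ) / 2 ^ n + 2 * μ) / 2 with hμ₀
      have h₀pos : 0 < μ₀ := by positivity
      have h₀mem : (1:ℝ) / 2 ^ n < μ₀ := by rw [hμ₀]; linarith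
      have hhalf : μ₀ / 2 < μ := by rw [hμ₀]; linarith
      exact res_step hmono h₀pos (ih μ₀ h₀mem) hhalf hμpos
  obtain ⟨n, hn⟩ := exists_pow_lt_of_lt_one hpos (show (1:ℝ)/2 < 1 by norm_num)
  exact key n lam (by rwa [div_pow, one_pow] at hn)


open scoped Classical in
noncomputable def Jf (A : D →ₗ[ℝ] L) (lam : ℝ) (f : L) : D :=
  if h : ∃ u : D, (u : L) + lam • A u = f then h.choose else 0

section Resolvent

variable (hmono : ∀ u : D, 0 ≤ ⟪A u, (u : L)⟫)
variable (hmax : ∀ f : L, ∃ u : D, A u + (u : L) = f)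
variable {lam : ℝ} (hl : 0 < lam)

include hmono hmax hl

lemma Jf_spec (f : L) : ((Jf A lam f : L)) + lam • A (Jf A lam f) = f := by
  have h := res_all hmono hmax hl f
  classical
  rw [Jf, dif_pos h]
  exact h.choose_spec

lemma Jf_eq {u : D} {f : L} (h : (u : L) + lam • A u = f) : Jf A lam f = u :=
  res_uniq hmono hl.le ((Jf_spec hmono hmax hl f).trans h.symm)

lemma Jf_add (f g : L) : Jf A lam (f + g) = Jf A lam f + Jf A lam g := by
  refine Jf_eq hmono hmax hl ?_
  push_cast [map_add, smul_add]
  rw [show ((Jf A lam f : L) + (Jf A lam g : L) + (lam • A (Jf A lam f) + lam • A (Jf A lam g)))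
      = ((Jf A lam f : L) + lam • A (Jf A lam f)) + ((Jf A lam g : L) + lam • A (Jf A lam g))
      by abel, Jf_spec hmono hmax hl f, Jf_spec hmono hmax hl g]

lemma Jf_smul (c : ℝ) (f : L) : Jf A lam (c • f) = c • Jf A lam f := by
  refine Jf_eq hmono hmax hl ?_
  push_cast [map_smul]
  rw [smul_comm lam c, ← smul_add, Jf_spec hmono hmax hl f]

lemma Jf_norm (f : L) : ‖(Jf A lam f : L)‖ ≤ ‖f‖ :=
  norm_le_of_eq hmono hl.le _ _ (Jf_spec hmono hmax hl f)

noncomputable def Jc : L →L[ℝ] L :=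
  LinearMap.mkContinuous
    { toFun := fun f => (Jf A lam f : L)
      map_add' := fun f g => by
        show ((Jf A lam (f + g) : L)) = (Jf A lam f : L) + (Jf A lam g : L)
        rw [Jf_add hmono hmax hl]; push_cast; ring_nf
      map_smul' := fun c f => by
        show ((Jf A lam (c • f) : L)) = c • (Jf A lam f : L)
        rw [Jf_smul hmono hmax hl]; push_cast; ring_nf }
    1 (fun f => by simpa using Jf_norm hmono hmax hl f)

lemma Jc_apply (f : L) : Jc hmono hmax hl f = (Jf A lam f : L) := rfl

lemma Jc_mem (f : L) : Jc hmono hmax hl f ∈ D := (Jf A lam f).2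

lemma Jc_norm : ‖Jc hmono hmax hl‖ ≤ 1 :=
  LinearMap.mkContinuous_norm_le _ zero_le_one _

lemma Jc_norm_apply (f : L) : ‖Jc hmono hmax hl f‖ ≤ ‖f‖ := Jf_norm hmono hmax hl f

noncomputable def Ay : L →L[ℝ] L :=
  lam⁻¹ • (ContinuousLinearMap.id ℝ L - Jc hmono hmax hl)

lemma Ay_apply (f : L) : Ay hmono hmax hl f = lam⁻¹ • (f - Jc hmono hmax hl f) := rfl

lemma Ay_decomp (f : L) : Jc hmono hmax hl f + lam • Ay hmono hmax hl f = f := by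
  rw [Ay_apply, smul_smul, mul_inv_cancel₀ (ne_of_gt hl), one_smul]; abel

lemma A_Jf (f : L) : A (Jf A lam f) = Ay hmono hmax hl f := by
  have h := Jf_spec hmono hmax hl f
  have h2 : lam • A (Jf A lam f) = f - Jc hmono hmax hl f := by
    rw [Jc_apply, eq_sub_iff_add_eq, add_comm]
    exact h
  rw [Ay_apply, ← h2, smul_smul, inv_mul_cancel₀ (ne_of_gt hl), one_smul]

lemma Ay_mono (f : L) : 0 ≤ ⟪Ay hmono hmax hl f, f⟫ := by
  have hd := Ay_decomp hmono hmax hl f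
  have hfd : f - Jc hmono hmax hl f = lam • Ay hmono hmax hl f := by
    rw [eq_comm, eq_sub_iff_add_eq, add_comm]; exact hd
  have h1 : ⟪Ay hmono hmax hl f, f⟫
      = ⟪Ay hmono hmax hl f, Jc hmono hmax hl f⟫ + lam * ‖Ay hmono hmax hl f‖ ^ 2 := by
    have h3 : ⟪Ay hmono hmax hl f, f - Jc hmono hmax hl f⟫
        = lam * ‖Ay hmono hmax hl f‖ ^ 2 := by
      rw [hfd, real_inner_smul_right, real_inner_self_eq_norm_sq]
    rw [inner_sub_right] at h3; linarith
  have h2 : 0 ≤ ⟪Ay hmono hmax hl f, Jc hmono hmax hl f⟫ := by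
    rw [← A_Jf hmono hmax hl f, Jc_apply]
    exact hmono _
  nlinarith [sq_nonneg ‖Ay hmono hmax hl f‖]

lemma Jf_of_mem {x : L} (hx : x ∈ D) :
    Jf A lam (x + lam • A ⟨x, hx⟩) = ⟨x, hx⟩ := Jf_eq hmono hmax hl rfl

lemma Ay_of_mem {x : L} (hx : x ∈ D) :
    Ay hmono hmax hl x = Jc hmono hmax hl (A ⟨x, hx⟩) := by
  have h1 : Jc hmono hmax hl (x + lam • A ⟨x, hx⟩) = x := by
    rw [Jc_apply, Jf_of_mem hmono hmax hl hx]
  have h2 : Jc hmono hmax hl x + lam • Jc hmono hmax hl (A ⟨x, hx⟩) = x := by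
    conv_rhs => rw [← h1]
    rw [map_add, map_smul]
  have h3 : lam • Jc hmono hmax hl (A ⟨x, hx⟩) = x - Jc hmono hmax hl x :=
    eq_sub_of_add_eq' h2
  rw [Ay_apply, ← h3, smul_smul, inv_mul_cancel₀ (ne_of_gt hl), one_smul]

lemma Ay_norm_of_mem {x : L} (hx : x ∈ D) :
    ‖Ay hmono hmax hl x‖ ≤ ‖A ⟨x, hx⟩‖ := by
  rw [Ay_of_mem hmono hmax hl hx]
  exact Jc_norm_apply hmono hmax hl _

lemma Jc_dist_of_mem {x : L} (hx : x ∈ D) :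
    ‖Jc hmono hmax hl x - x‖ ≤ lam * ‖A ⟨x, hx⟩‖ := by
  have hd := Ay_decomp hmono hmax hl x
  have h5 : Jc hmono hmax hl x = x - lam • Ay hmono hmax hl x := eq_sub_of_add_eq hd
  rw [h5, show x - lam • Ay hmono hmax hl x - x = -(lam • Ay hmono hmax hl x) from by abel,
    norm_neg, norm_smul, Real.norm_eq_abs, abs_of_pos hl]
  exact mul_le_mul_of_nonneg_left (Ay_norm_of_mem hmono hmax hl hx) hl.le

end Resolvent


section ExpSemigroup

-- generic facts about `exp (t • B)` for a dissipative bounded operator `B`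
variable (B : L →L[ℝ] L)

noncomputable def expS (t : ℝ) : L →L[ℝ] L := exp (t • B)

lemma expS_zero : expS (B := B) 0 = 1 := by rw [expS, zero_smul, exp_zero]

lemma expS_add (t s : ℝ) : expS B (t + s) = expS B t * expS B s := by
  rw [expS, expS, expS, add_smul]
  exact exp_add_of_commute_of_mem_ball (𝕂 := ℝ) (((Commute.refl B).smul_left t).smul_right s)
    (by rw [expSeries_radius_eq_top]; exact edist_lt_top _ _)
    (by rw [expSeries_radius_eq_top]; exact edist_lt_top _ _)

lemma expS_comm (t : ℝ) : Commute B (expS B t) :=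
  ((Commute.refl B).smul_right t).exp_right

lemma expS_apply_comm (t : ℝ) (x : L) : expS B t (B x) = B (expS B t x) := by
  calc expS B t (B x) = (expS B t * B) x := rfl
    _ = (B * expS B t) x := by rw [← (expS_comm B t).eq]
    _ = B (expS B t x) := rfl

lemma hasDerivAt_expS (x : L) (t : ℝ) :
    HasDerivAt (fun s : ℝ => expS B s x) (expS B t (B x)) t := by
  have h1 : HasDerivAt (fun s : ℝ => exp (s • B)) (exp (t • B) * B) t :=
    hasDerivAt_exp_smul_const (𝕂 := ℝ) B t
  have h2 := h1.clm_apply (hasDerivAt_const t x)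
  simpa [expS] using h2

lemma hasDerivAt_expS' (x : L) (t : ℝ) :
    HasDerivAt (fun s : ℝ => expS B s x) (B (expS B t x)) t := by
  exact expS_apply_comm B t x ▸ hasDerivAt_expS B x t

lemma continuous_expS_apply (x : L) : Continuous (fun s : ℝ => expS B s x) :=
  continuous_iff_continuousAt.2 fun t => (hasDerivAt_expS B x t).continuousAt

variable (hB : ∀ y : L, ⟪B y, y⟫ ≤ 0)
include hB

lemma expS_norm_apply_le {t : ℝ} (ht : 0 ≤ t) (x : L) : ‖expS B t x‖ ≤ ‖x‖ := by
  set φ : ℝ → ℝ := fun s => ⟪expS B s x, expS B s x⟫ with hφ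
  have hd : ∀ s : ℝ, HasDerivAt φ
      (⟪expS B s x, B (expS B s x)⟫ + ⟪B (expS B s x), expS B s x⟫) s :=
    fun s => HasDerivAt.inner ℝ (hasDerivAt_expS' B x s) (hasDerivAt_expS' B x s)
  have hmono : Antitone φ := by
    apply antitone_of_deriv_nonpos
    · exact fun s => (hd s).differentiableAt
    · intro s
      rw [(hd s).deriv]
      have h6 := hB (expS B s x)
      have h7 : ⟪expS B s x, B (expS B s x)⟫ = ⟪B (expS B s x), expS B s x⟫ :=
        real_inner_comm _ _
      linarith
  have h0 : φ 0 = ‖x‖ ^ 2 := by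
    simp [hφ, expS_zero, real_inner_self_eq_norm_sq]
  have ht2 : φ t ≤ ‖x‖ ^ 2 := h0 ▸ hmono ht
  have : ‖expS B t x‖ ^ 2 ≤ ‖x‖ ^ 2 := by
    rw [← real_inner_self_eq_norm_sq]; exact ht2
  nlinarith [norm_nonneg (expS B t x), norm_nonneg x]

lemma expS_lipschitz {s t : ℝ} (hs : 0 ≤ s) (ht : 0 ≤ t) (x : L) :
    ‖expS B t x - expS B s x‖ ≤ ‖B x‖ * |t - s| := by
  have := Convex.norm_image_sub_le_of_norm_hasDerivWithin_le
    (f := fun r : ℝ => expS B r x) (f' := fun r : ℝ => expS B r (B x)) (s := Ici (0:ℝ))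
    (C := ‖B x‖)
    (fun r hr => (hasDerivAt_expS B x r).hasDerivWithinAt)
    (fun r hr => expS_norm_apply_le B hB hr (B x))
    (convex_Ici 0) hs ht
  simpa [Real.norm_eq_abs] using this

end ExpSemigroup


section Semigroup

variable (hmono : ∀ u : D, 0 ≤ ⟪A u, (u : L)⟫)
variable (hmax : ∀ f : L, ∃ u : D, A u + (u : L) = f)

lemma Ay_dissip {lam : ℝ} (hl : 0 < lam) : ∀ y : L, ⟪(-(Ay hmono hmax hl)) y, y⟫ ≤ 0 := by
  intro y
  have := Ay_mono hmono hmax hl y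
  rw [ContinuousLinearMap.neg_apply, inner_neg_left]
  linarith

noncomputable def Sl {lam : ℝ} (hl : 0 < lam) (t : ℝ) : L →L[ℝ] L :=
  expS (-(Ay hmono hmax hl)) t

lemma Sl_zero {lam : ℝ} (hl : 0 < lam) : Sl hmono hmax hl 0 = 1 := expS_zero _

lemma Sl_add {lam : ℝ} (hl : 0 < lam) (t s : ℝ) :
    Sl hmono hmax hl (t + s) = Sl hmono hmax hl t * Sl hmono hmax hl s := expS_add _ t s

lemma Sl_contract {lam : ℝ} (hl : 0 < lam) {t : ℝ} (ht : 0 ≤ t) (x : L) :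
    ‖Sl hmono hmax hl t x‖ ≤ ‖x‖ :=
  expS_norm_apply_le _ (Ay_dissip hmono hmax hl) ht x

lemma Ay_Sl_comm {lam : ℝ} (hl : 0 < lam) (t : ℝ) (x : L) :
    Ay hmono hmax hl (Sl hmono hmax hl t x) = Sl hmono hmax hl t (Ay hmono hmax hl x) := by
  have h := expS_apply_comm (-(Ay hmono hmax hl)) t x
  simp only [ContinuousLinearMap.neg_apply, map_neg, neg_inj] at h
  exact h.symm

lemma hasDerivAt_Sl {lam : ℝ} (hl : 0 < lam) (t : ℝ) (x : L) :
    HasDerivAt (fun s : ℝ => Sl hmono hmax hl s x)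
      (-(Ay hmono hmax hl (Sl hmono hmax hl t x))) t := by
  have h := hasDerivAt_expS' (-(Ay hmono hmax hl)) x t
  simpa [Sl] using h

lemma Sl_lipschitz {lam : ℝ} (hl : 0 < lam) {s t : ℝ} (hs : 0 ≤ s) (ht : 0 ≤ t)
    {x : L} (hx : x ∈ D) :
    ‖Sl hmono hmax hl t x - Sl hmono hmax hl s x‖ ≤ ‖A ⟨x, hx⟩‖ * |t - s| := by
  have h := expS_lipschitz (-(Ay hmono hmax hl)) (Ay_dissip hmono hmax hl) hs ht x
  refine h.trans ?_
  have : ‖(-(Ay hmono hmax hl)) x‖ ≤ ‖A ⟨x, hx⟩‖ := by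
    rw [ContinuousLinearMap.neg_apply, norm_neg]
    exact Ay_norm_of_mem hmono hmax hl hx
  exact mul_le_mul_of_nonneg_right this (abs_nonneg _)

lemma Sl_norm_Ay {lam : ℝ} (hl : 0 < lam) {t : ℝ} (ht : 0 ≤ t) {x : L} (hx : x ∈ D) :
    ‖Ay hmono hmax hl (Sl hmono hmax hl t x)‖ ≤ ‖A ⟨x, hx⟩‖ := by
  rw [Ay_Sl_comm hmono hmax hl]
  exact (Sl_contract hmono hmax hl ht _).trans (Ay_norm_of_mem hmono hmax hl hx)

lemma yosida_inner {lam mu : ℝ} (hl : 0 < lam) (hm : 0 < mu) (p q : L) :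
    -((lam + mu) * (‖Ay hmono hmax hl p‖ * ‖Ay hmono hmax hm q‖))
      ≤ ⟪Ay hmono hmax hl p - Ay hmono hmax hm q, p - q⟫ := by
  set a := Ay hmono hmax hl p with ha
  set b := Ay hmono hmax hm q with hb
  have hp : p = Jc hmono hmax hl p + lam • a := (Ay_decomp hmono hmax hl p).symm
  have hq : q = Jc hmono hmax hm q + mu • b := (Ay_decomp hmono hmax hm q).symm
  have hsplit : ⟪a - b, p - q⟫
      = ⟪a - b, Jc hmono hmax hl p - Jc hmono hmax hm q⟫ + ⟪a - b, lam • a - mu • b⟫ := by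
    rw [← inner_add_right]
    congr 1
    rw [show Jc hmono hmax hl p - Jc hmono hmax hm q + (lam • a - mu • b)
        = (Jc hmono hmax hl p + lam • a) - (Jc hmono hmax hm q + mu • b) from by abel,
      ← hp, ← hq]
  have hterm1 : 0 ≤ ⟪a - b, Jc hmono hmax hl p - Jc hmono hmax hm q⟫ := by
    have hab : a - b = A (Jf A lam p - Jf A mu q) := by
      rw [map_sub, A_Jf hmono hmax hl, A_Jf hmono hmax hm]
    have hJc : Jc hmono hmax hl p - Jc hmono hmax hm q
        = ((Jf A lam p - Jf A mu q : D) : L) := by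
      push_cast [Jc_apply]; ring_nf
    rw [hab, hJc]
    exact hmono _
  have hterm2 : -((lam + mu) * (‖a‖ * ‖b‖)) ≤ ⟪a - b, lam • a - mu • b⟫ := by
    rw [inner_sub_left, inner_sub_right, inner_sub_right, real_inner_smul_right,
      real_inner_smul_right, real_inner_smul_right, real_inner_smul_right,
      real_inner_self_eq_norm_sq, real_inner_self_eq_norm_sq]
    have h1 : ⟪a, b⟫ ≤ ‖a‖ * ‖b‖ := real_inner_le_norm a b
    have h2 : ⟪b, a⟫ ≤ ‖a‖ * ‖b‖ := by
      rw [real_inner_comm]; exact real_inner_le_norm a b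
    nlinarith [sq_nonneg ‖a‖, sq_nonneg ‖b‖, hl.le, hm.le]
  linarith [hsplit, hterm1, hterm2]

lemma Sl_cauchy_est {lam mu : ℝ} (hl : 0 < lam) (hm : 0 < mu) {x : L} (hx : x ∈ D)
    {t : ℝ} (ht : 0 ≤ t) :
    ‖Sl hmono hmax hl t x - Sl hmono hmax hm t x‖ ^ 2
      ≤ 2 * (lam + mu) * ‖A ⟨x, hx⟩‖ ^ 2 * t := by
  set K := ‖A ⟨x, hx⟩‖ with hK
  set u := fun s : ℝ => Sl hmono hmax hl s x with hu
  set v := fun s : ℝ => Sl hmono hmax hm s x with hv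
  set ψ : ℝ → ℝ := fun s => ⟪u s - v s, u s - v s⟫ - 2 * (lam + mu) * K ^ 2 * s with hψ
  have hdu : ∀ s : ℝ, HasDerivAt u (-(Ay hmono hmax hl (u s))) s :=
    fun s => hasDerivAt_Sl hmono hmax hl s x
  have hdv : ∀ s : ℝ, HasDerivAt v (-(Ay hmono hmax hm (v s))) s :=
    fun s => hasDerivAt_Sl hmono hmax hm s x
  have hdψ : ∀ s : ℝ, HasDerivAt ψ
      (⟪u s - v s, -(Ay hmono hmax hl (u s)) - -(Ay hmono hmax hm (v s))⟫
        + ⟪-(Ay hmono hmax hl (u s)) - -(Ay hmono hmax hm (v s)), u s - v s⟫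
        - 2 * (lam + mu) * K ^ 2) s := by
    intro s
    have h1 := HasDerivAt.inner ℝ ((hdu s).sub (hdv s)) ((hdu s).sub (hdv s))
    have h2 : HasDerivAt (fun s : ℝ => 2 * (lam + mu) * K ^ 2 * s)
        (2 * (lam + mu) * K ^ 2) s := by
      simpa using (hasDerivAt_id s).const_mul (2 * (lam + mu) * K ^ 2)
    exact h1.sub h2
  have hanti : AntitoneOn ψ (Ici 0) := by
    apply antitoneOn_of_deriv_nonpos (convex_Ici 0)
    · exact fun s _ => ((hdψ s).continuousAt).continuousWithinAt
    · exact fun s _ => ((hdψ s).differentiableAt).differentiableWithinAt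
    · intro s hs
      rw [interior_Ici] at hs
      have hs0 : (0:ℝ) ≤ s := le_of_lt hs
      rw [(hdψ s).deriv]
      have hin := yosida_inner hmono hmax hl hm (u s) (v s)
      have hna : ‖Ay hmono hmax hl (u s)‖ ≤ K := Sl_norm_Ay hmono hmax hl hs0 hx
      have hnb : ‖Ay hmono hmax hm (v s)‖ ≤ K := Sl_norm_Ay hmono hmax hm hs0 hx
      have hsym : ⟪u s - v s, -(Ay hmono hmax hl (u s)) - -(Ay hmono hmax hm (v s))⟫
          = ⟪-(Ay hmono hmax hl (u s)) - -(Ay hmono hmax hm (v s)), u s - v s⟫ :=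
        real_inner_comm _ _
      have hneg : ⟪-(Ay hmono hmax hl (u s)) - -(Ay hmono hmax hm (v s)), u s - v s⟫
          = -⟪Ay hmono hmax hl (u s) - Ay hmono hmax hm (v s), u s - v s⟫ := by
        rw [show -(Ay hmono hmax hl (u s)) - -(Ay hmono hmax hm (v s))
          = -(Ay hmono hmax hl (u s) - Ay hmono hmax hm (v s)) from by abel, inner_neg_left]
      have hKnn : (0:ℝ) ≤ K := norm_nonneg _
      have hprod : ‖Ay hmono hmax hl (u s)‖ * ‖Ay hmono hmax hm (v s)‖ ≤ K ^ 2 := by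
        nlinarith [norm_nonneg (Ay hmono hmax hl (u s)), norm_nonneg (Ay hmono hmax hm (v s))]
      nlinarith [hin, hsym, hneg]
  have hψ0 : ψ 0 = 0 := by
    simp [hψ, hu, hv, Sl_zero hmono hmax hl, Sl_zero hmono hmax hm]
  have := hanti (self_mem_Ici) ht ht
  rw [hψ0] at this
  have hfin : ⟪u t - v t, u t - v t⟫ ≤ 2 * (lam + mu) * K ^ 2 * t := by
    simp only [hψ] at this; linarith
  rw [← real_inner_self_eq_norm_sq]
  exact hfin

include hmono hmax in
lemma dense_D : Dense (D : Set L) := by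
  have htop : D.topologicalClosure = ⊤ := by
    rw [Submodule.topologicalClosure_eq_top_iff, Submodule.eq_bot_iff]
    intro f hf
    obtain ⟨u, hu⟩ := hmax f
    have h0 : ⟪(u : L), f⟫ = 0 := (Submodule.mem_orthogonal D f).mp hf (u : L) u.2
    have h1 : ⟪(u : L), f⟫ = ‖(u : L)‖ ^ 2 + ⟪(u : L), A u⟫ := by
      rw [← hu, inner_add_right, real_inner_self_eq_norm_sq, add_comm]
    have h2 : 0 ≤ ⟪(u : L), A u⟫ := by
      rw [real_inner_comm]; exact hmono u
    have hu0 : ‖(u : L)‖ ^ 2 ≤ 0 := by rw [h0] at h1; linarith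
    have hu0' : (u : L) = 0 := by
      have := norm_nonneg (u : L)
      have hn : ‖(u : L)‖ = 0 := by nlinarith
      simpa using hn
    have hA0 : u = 0 := Subtype.ext (by simpa using hu0')
    rw [← hu, hA0]
    simp
  exact Submodule.dense_iff_topologicalClosure_eq_top.mpr htop


/-! ### the limit semigroup -/

lemma ln_pos (n : ℕ) : (0:ℝ) < 1/(n+1) := by positivity

lemma ln_tendsto : Tendsto (fun n : ℕ => (1:ℝ)/(n+1)) atTop (𝓝 0) :=
  tendsto_one_div_add_atTop_nhds_zero_nat

noncomputable def Tn (n : ℕ) : ℝ → L →L[ℝ] L := Sl hmono hmax (ln_pos n)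

noncomputable def An (n : ℕ) : L →L[ℝ] L := Ay hmono hmax (ln_pos n)

noncomputable def Jn (n : ℕ) : L →L[ℝ] L := Jc hmono hmax (ln_pos n)

lemma cauchy_T_D {x : L} (hx : x ∈ D) {t : ℝ} (ht : 0 ≤ t) :
    CauchySeq (fun n => Tn hmono hmax n t x) := by
  set K := ‖A ⟨x, hx⟩‖ with hK
  apply cauchySeq_of_le_tendsto_0 (b := fun N : ℕ => Real.sqrt (4 / (N+1) * K ^ 2 * t))
  · intro n m N hn hm
    rw [dist_eq_norm]
    have hsq := Sl_cauchy_est hmono hmax (ln_pos n) (ln_pos m) hx ht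
    have hle : 2 * ((1:ℝ)/(n+1) + 1/(m+1)) * K ^ 2 * t ≤ 4 / (N+1) * K ^ 2 * t := by
      have h1 : (1:ℝ)/(n+1) ≤ 1/(N+1) :=
        one_div_le_one_div_of_le (by positivity) (by exact_mod_cast Nat.succ_le_succ hn)
      have h2 : (1:ℝ)/(m+1) ≤ 1/(N+1) :=
        one_div_le_one_div_of_le (by positivity) (by exact_mod_cast Nat.succ_le_succ hm)
      have hKt : 0 ≤ K ^ 2 * t := by positivity
      have : 2 * ((1:ℝ)/(n+1) + 1/(m+1)) ≤ 4 / (N+1) := by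
        rw [show (4:ℝ)/(N+1) = 2 * (1/(N+1) + 1/(N+1)) by ring]
        linarith
      nlinarith
    refine (Real.le_sqrt (norm_nonneg _) (by positivity)).mpr ?_
    calc ‖Tn hmono hmax n t x - Tn hmono hmax m t x‖ ^ 2
        ≤ 2 * ((1:ℝ)/(n+1) + 1/(m+1)) * K ^ 2 * t := hsq
      _ ≤ 4 / (N+1) * K ^ 2 * t := hle
  · have h0 : Tendsto (fun N : ℕ => 4 / ((N:ℝ)+1) * K ^ 2 * t) atTop (𝓝 0) := by
      have := ln_tendsto.const_mul (4 * K ^ 2 * t)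
      simp only [mul_zero] at this
      convert this using 2 with N
      ring
    have := h0.sqrt
    simpa using this

lemma cauchy_T {t : ℝ} (ht : 0 ≤ t) (y : L) :
    CauchySeq (fun n => Tn hmono hmax n t y) := by
  rw [Metric.cauchySeq_iff]
  intro ε hε
  obtain ⟨x, hxD, hxy⟩ := (dense_D hmono hmax).exists_dist_lt y (show 0 < ε/4 by linarith)
  obtain ⟨N, hN⟩ := Metric.cauchySeq_iff.mp (cauchy_T_D hmono hmax hxD ht) (ε/4)
    (by linarith)
  refine ⟨N, fun m hm n hn => ?_⟩
  have hc : ∀ k : ℕ, dist (Tn hmono hmax k t y) (Tn hmono hmax k t x) ≤ dist y x := by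
    intro k
    rw [dist_eq_norm, ← map_sub, dist_eq_norm]
    exact Sl_contract hmono hmax (ln_pos k) ht _
  calc dist (Tn hmono hmax m t y) (Tn hmono hmax n t y)
      ≤ dist (Tn hmono hmax m t y) (Tn hmono hmax m t x)
        + dist (Tn hmono hmax m t x) (Tn hmono hmax n t x)
        + dist (Tn hmono hmax n t x) (Tn hmono hmax n t y) := dist_triangle4 _ _ _ _
    _ < ε := by
        have h1 := hc m
        have h2 := hN m hm n hn
        have h3 := hc n
        rw [dist_comm] at h3
        have hdyx : dist y x < ε/4 := hxy
        linarith

noncomputable def slim (t : ℝ) (y : L) : L :=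
  limUnder atTop (fun n => Tn hmono hmax n (max t 0) y)

lemma tendsto_slim (t : ℝ) (y : L) :
    Tendsto (fun n => Tn hmono hmax n (max t 0) y) atTop (𝓝 (slim hmono hmax t y)) :=
  (cauchy_T hmono hmax (le_max_right t 0) y).tendsto_limUnder

noncomputable def Sc (t : ℝ) : L →L[ℝ] L :=
  LinearMap.mkContinuous
    { toFun := slim hmono hmax t
      map_add' := fun y z => by
        refine tendsto_nhds_unique (tendsto_slim hmono hmax t (y + z)) ?_
        have := (tendsto_slim hmono hmax t y).add (tendsto_slim hmono hmax t z)
        simpa [map_add] using this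
      map_smul' := fun c y => by
        refine tendsto_nhds_unique (tendsto_slim hmono hmax t (c • y)) ?_
        have := (tendsto_slim hmono hmax t y).const_smul c
        simpa [map_smul] using this }
    1 (fun y => by
      have hb : ∀ n, ‖Tn hmono hmax n (max t 0) y‖ ≤ ‖y‖ :=
        fun n => Sl_contract hmono hmax (ln_pos n) (le_max_right t 0) y
      have := le_of_tendsto (tendsto_slim hmono hmax t y).norm
        (Filter.Eventually.of_forall hb)
      simpa using this)

lemma tendsto_Sc {t : ℝ} (ht : 0 ≤ t) (y : L) :
    Tendsto (fun n => Tn hmono hmax n t y) atTop (𝓝 (Sc hmono hmax t y)) := by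
  have := tendsto_slim hmono hmax t y
  rw [max_eq_left ht] at this
  exact this

lemma Sc_norm (t : ℝ) : ‖Sc hmono hmax t‖ ≤ 1 :=
  LinearMap.mkContinuous_norm_le _ zero_le_one _

lemma Sc_contract {t : ℝ} (ht : 0 ≤ t) (y : L) : ‖Sc hmono hmax t y‖ ≤ ‖y‖ := by
  have hb : ∀ n, ‖Tn hmono hmax n t y‖ ≤ ‖y‖ :=
    fun n => Sl_contract hmono hmax (ln_pos n) ht y
  exact le_of_tendsto (tendsto_Sc hmono hmax ht y).norm (Filter.Eventually.of_forall hb)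

lemma Sc_zero (y : L) : Sc hmono hmax 0 y = y := by
  refine tendsto_nhds_unique (tendsto_Sc hmono hmax le_rfl y) ?_
  have : ∀ n, Tn hmono hmax n 0 y = y := by
    intro n
    rw [Tn, Sl_zero hmono hmax (ln_pos n), ContinuousLinearMap.one_apply]
  simpa [this] using tendsto_const_nhds

lemma Sc_semigroup {t s : ℝ} (ht : 0 ≤ t) (hs : 0 ≤ s) (y : L) :
    Sc hmono hmax (t + s) y = Sc hmono hmax t (Sc hmono hmax s y) := by
  refine tendsto_nhds_unique (tendsto_Sc hmono hmax (by linarith) y) ?_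
  have heq : ∀ n, Tn hmono hmax n (t + s) y = Tn hmono hmax n t (Tn hmono hmax n s y) := by
    intro n
    rw [Tn, Sl_add hmono hmax (ln_pos n), ContinuousLinearMap.mul_apply]
  rw [show (fun n => Tn hmono hmax n (t + s) y)
      = fun n => Tn hmono hmax n t (Tn hmono hmax n s y) from funext heq]
  rw [tendsto_iff_dist_tendsto_zero]
  apply squeeze_zero (fun n => dist_nonneg)
    (g := fun n => dist (Tn hmono hmax n s y) (Sc hmono hmax s y)
      + dist (Tn hmono hmax n t (Sc hmono hmax s y)) (Sc hmono hmax t (Sc hmono hmax s y)))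
  · intro n
    calc dist (Tn hmono hmax n t (Tn hmono hmax n s y)) (Sc hmono hmax t (Sc hmono hmax s y))
        ≤ dist (Tn hmono hmax n t (Tn hmono hmax n s y))
            (Tn hmono hmax n t (Sc hmono hmax s y))
          + dist (Tn hmono hmax n t (Sc hmono hmax s y))
            (Sc hmono hmax t (Sc hmono hmax s y)) := dist_triangle _ _ _
      _ ≤ dist (Tn hmono hmax n s y) (Sc hmono hmax s y)
          + dist (Tn hmono hmax n t (Sc hmono hmax s y))
            (Sc hmono hmax t (Sc hmono hmax s y)) := by
          gcongr
          rw [dist_eq_norm, ← map_sub, dist_eq_norm]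
          exact Sl_contract hmono hmax (ln_pos n) ht _
  · have h1 := (tendsto_iff_dist_tendsto_zero.mp (tendsto_Sc hmono hmax hs y))
    have h2 := (tendsto_iff_dist_tendsto_zero.mp
      (tendsto_Sc hmono hmax ht (Sc hmono hmax s y)))
    simpa using h1.add h2


include hmono hmax in
lemma A_closed {d g : L} (dn : ℕ → D) (hd : Tendsto (fun n => ((dn n : L))) atTop (𝓝 d))
    (hg : Tendsto (fun n => A (dn n)) atTop (𝓝 g)) :
    ∃ hd : d ∈ D, A ⟨d, hd⟩ = g := by
  obtain ⟨z, hz⟩ := hmax (d + g)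
  have hpos : ∀ n, 0 ≤ ⟪A (dn n) - A z, (dn n : L) - (z : L)⟫ := by
    intro n
    have := hmono (dn n - z)
    rwa [map_sub, Submodule.coe_sub] at this
  have hlim : Tendsto (fun n => ⟪A (dn n) - A z, (dn n : L) - (z : L)⟫) atTop
      (𝓝 ⟪g - A z, d - (z : L)⟫) :=
    Filter.Tendsto.inner (hg.sub tendsto_const_nhds) (hd.sub tendsto_const_nhds)
  have hge : 0 ≤ ⟪g - A z, d - (z : L)⟫ :=
    ge_of_tendsto hlim (Filter.Eventually.of_forall hpos)
  have hAz : A z = d + g - (z : L) := by rw [← hz]; abel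
  have hgz : g - A z = (z : L) - d := by rw [hAz]; abel
  rw [hgz] at hge
  have hdz : d = (z : L) := by
    have h1 : ⟪(z : L) - d, d - (z : L)⟫ = -(‖d - (z : L)‖ ^ 2) := by
      rw [show (z : L) - d = -(d - (z : L)) from by abel, inner_neg_left,
        real_inner_self_eq_norm_sq]
    rw [h1] at hge
    have h2 : ‖d - (z : L)‖ ^ 2 ≤ 0 := by linarith
    have h3 : ‖d - (z : L)‖ = 0 := by nlinarith [norm_nonneg (d - (z : L))]
    exact sub_eq_zero.mp (norm_eq_zero.mp h3)
  have hdmem : d ∈ D := by rw [hdz]; exact z.2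
  refine ⟨hdmem, ?_⟩
  have hzd : (⟨d, hdmem⟩ : D) = z := Subtype.ext hdz
  rw [hzd, hAz, ← hdz]
  abel

lemma jc_tendsto (y : L) :
    Tendsto (fun n => Jn hmono hmax n y) atTop (𝓝 y) := by
  rw [Metric.tendsto_atTop]
  intro ε hε
  obtain ⟨x, hxD, hxy⟩ := (dense_D hmono hmax).exists_dist_lt y (show 0 < ε/3 by linarith)
  set K := ‖A ⟨x, hxD⟩‖ with hK
  obtain ⟨N, hN⟩ := (Metric.tendsto_atTop.mp (ln_tendsto)) (ε/(3*(K+1)))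
    (by positivity)
  refine ⟨N, fun n hn => ?_⟩
  have h1 : dist (Jn hmono hmax n y) (Jn hmono hmax n x) ≤ dist y x := by
    rw [dist_eq_norm, ← map_sub, dist_eq_norm]
    exact Jc_norm_apply hmono hmax (ln_pos n) _
  have h2 : dist (Jn hmono hmax n x) x ≤ (1/(n+1)) * K := by
    rw [dist_eq_norm]
    exact Jc_dist_of_mem hmono hmax (ln_pos n) hxD
  have h3 : (1/((n:ℝ)+1)) * K < ε/3 := by
    have := hN n hn
    rw [Real.dist_eq, sub_zero, abs_of_pos (ln_pos n)] at this
    have hK1 : 0 ≤ K := norm_nonneg _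
    calc (1/((n:ℝ)+1)) * K ≤ (1/((n:ℝ)+1)) * (K+1) := by
          have := (ln_pos n).le
          nlinarith
      _ < (ε/(3*(K+1))) * (K+1) := by
          apply mul_lt_mul_of_pos_right this (by positivity)
      _ = ε/3 := by field_simp
  calc dist (Jn hmono hmax n y) y
      ≤ dist (Jn hmono hmax n y) (Jn hmono hmax n x) + dist (Jn hmono hmax n x) x
        + dist x y := dist_triangle4 _ _ _ _
    _ < ε := by
        rw [dist_comm x y] at *
        linarith [h1, h2, h3, hxy]

lemma an_tendsto {x : L} (hx : x ∈ D) :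
    Tendsto (fun n => An hmono hmax n x) atTop (𝓝 (A ⟨x, hx⟩)) := by
  have heq : ∀ n, An hmono hmax n x = Jn hmono hmax n (A ⟨x, hx⟩) :=
    fun n => Ay_of_mem hmono hmax (ln_pos n) hx
  rw [funext heq]
  exact jc_tendsto hmono hmax _

lemma tendsto_T_apply_var {t : ℝ} (ht : 0 ≤ t) {y : L} {yn : ℕ → L}
    (hyn : Tendsto yn atTop (𝓝 y)) :
    Tendsto (fun n => Tn hmono hmax n t (yn n)) atTop (𝓝 (Sc hmono hmax t y)) := by
  rw [tendsto_iff_dist_tendsto_zero]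
  apply squeeze_zero (fun n => dist_nonneg)
    (g := fun n => dist (yn n) y + dist (Tn hmono hmax n t y) (Sc hmono hmax t y))
  · intro n
    calc dist (Tn hmono hmax n t (yn n)) (Sc hmono hmax t y)
        ≤ dist (Tn hmono hmax n t (yn n)) (Tn hmono hmax n t y)
          + dist (Tn hmono hmax n t y) (Sc hmono hmax t y) := dist_triangle _ _ _
      _ ≤ dist (yn n) y + dist (Tn hmono hmax n t y) (Sc hmono hmax t y) := by
          gcongr
          rw [dist_eq_norm, ← map_sub, dist_eq_norm]
          exact Sl_contract hmono hmax (ln_pos n) ht _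
  · have h1 := tendsto_iff_dist_tendsto_zero.mp hyn
    have h2 := tendsto_iff_dist_tendsto_zero.mp (tendsto_Sc hmono hmax ht y)
    simpa using h1.add h2

lemma Sc_mem {x : L} (hx : x ∈ D) {t : ℝ} (ht : 0 ≤ t) :
    ∃ hm : Sc hmono hmax t x ∈ D, A ⟨Sc hmono hmax t x, hm⟩ = Sc hmono hmax t (A ⟨x, hx⟩) := by
  set dn : ℕ → D := fun n => Jf A (1/(n+1)) (Tn hmono hmax n t x) with hdn
  have hdcoe : ∀ n, (dn n : L) = Jn hmono hmax n (Tn hmono hmax n t x) := fun n => rfl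
  have hAdn : ∀ n, A (dn n) = Tn hmono hmax n t (An hmono hmax n x) := by
    intro n
    rw [hdn]
    exact (A_Jf hmono hmax (ln_pos n) _).trans (Ay_Sl_comm hmono hmax (ln_pos n) t x)
  have hconv2 : Tendsto (fun n => A (dn n)) atTop (𝓝 (Sc hmono hmax t (A ⟨x, hx⟩))) := by
    rw [funext hAdn]
    exact tendsto_T_apply_var hmono hmax ht (an_tendsto hmono hmax hx)
  have hconv1 : Tendsto (fun n => (dn n : L)) atTop (𝓝 (Sc hmono hmax t x)) := by
    rw [tendsto_iff_dist_tendsto_zero]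
    apply squeeze_zero (fun n => dist_nonneg)
      (g := fun n => (1/(n+1)) * ‖A ⟨x, hx⟩‖
        + dist (Tn hmono hmax n t x) (Sc hmono hmax t x))
    · intro n
      have hJdist : dist (dn n : L) (Tn hmono hmax n t x) ≤ (1/(n+1)) * ‖A ⟨x, hx⟩‖ := by
        rw [hdcoe n, dist_eq_norm]
        have hdec := Ay_decomp hmono hmax (ln_pos n) (Tn hmono hmax n t x)
        have heq : Jn hmono hmax n (Tn hmono hmax n t x) - Tn hmono hmax n t x
            = -(((1:ℝ)/(n+1)) • An hmono hmax n (Tn hmono hmax n t x)) := by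
          rw [show Jn hmono hmax n (Tn hmono hmax n t x)
              = Tn hmono hmax n t x
                - ((1:ℝ)/(n+1)) • An hmono hmax n (Tn hmono hmax n t x) from
            eq_sub_of_add_eq hdec]
          abel
        rw [heq, norm_neg, norm_smul, Real.norm_eq_abs, abs_of_pos (ln_pos n)]
        exact mul_le_mul_of_nonneg_left
          (Sl_norm_Ay hmono hmax (ln_pos n) ht hx) (ln_pos n).le
      calc dist (dn n : L) (Sc hmono hmax t x)
          ≤ dist (dn n : L) (Tn hmono hmax n t x)
            + dist (Tn hmono hmax n t x) (Sc hmono hmax t x) := dist_triangle _ _ _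
        _ ≤ (1/(n+1)) * ‖A ⟨x, hx⟩‖
            + dist (Tn hmono hmax n t x) (Sc hmono hmax t x) := by
              have := hJdist; gcongr
    · have h1 : Tendsto (fun n : ℕ => (1/((n:ℝ)+1)) * ‖A ⟨x, hx⟩‖) atTop (𝓝 0) := by
        have := ln_tendsto.mul_const ‖A ⟨x, hx⟩‖
        simpa using this
      have h2 := tendsto_iff_dist_tendsto_zero.mp (tendsto_Sc hmono hmax ht x)
      simpa using h1.add h2
  exact A_closed hmono hmax dn hconv1 hconv2


lemma Sl_continuous {lam : ℝ} (hl : 0 < lam) (y : L) :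
    Continuous (fun s : ℝ => Sl hmono hmax hl s y) :=
  continuous_expS_apply _ y

lemma Sc_lip {x : L} (hx : x ∈ D) {s t : ℝ} (hs : 0 ≤ s) (ht : 0 ≤ t) :
    ‖Sc hmono hmax t x - Sc hmono hmax s x‖ ≤ ‖A ⟨x, hx⟩‖ * |t - s| := by
  refine le_of_tendsto (((tendsto_Sc hmono hmax ht x).sub
    (tendsto_Sc hmono hmax hs x)).norm) (Filter.Eventually.of_forall fun n => ?_)
  exact Sl_lipschitz hmono hmax (ln_pos n) hs ht hx

lemma Sc_cont (y : L) : ContinuousOn (fun t => Sc hmono hmax t y) (Ici 0) := by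
  intro t ht
  rw [Metric.continuousWithinAt_iff]
  intro ε hε
  obtain ⟨x, hxD, hyx⟩ := (dense_D hmono hmax).exists_dist_lt y (show 0 < ε/4 by linarith)
  set K := ‖A ⟨x, hxD⟩‖ with hK
  have hKnn : 0 ≤ K := norm_nonneg _
  refine ⟨ε/(4*(K+1)), by positivity, fun {s} hs hst => ?_⟩
  have hcon : ∀ r : ℝ, 0 ≤ r → dist (Sc hmono hmax r y) (Sc hmono hmax r x) ≤ dist y x := by
    intro r hr
    rw [dist_eq_norm, ← map_sub, dist_eq_norm]
    exact Sc_contract hmono hmax hr _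
  have hlip : dist (Sc hmono hmax s x) (Sc hmono hmax t x) ≤ K * |s - t| := by
    rw [dist_eq_norm]
    exact Sc_lip hmono hmax hxD ht hs
  have hmid : K * |s - t| < ε/4 := by
    have h1 : |s - t| < ε/(4*(K+1)) := by rwa [Real.dist_eq] at hst
    have h2 : K * |s - t| ≤ K * (ε/(4*(K+1))) :=
      mul_le_mul_of_nonneg_left h1.le hKnn
    have h3 : K * (ε/(4*(K+1))) < (K+1) * (ε/(4*(K+1))) := by
      apply mul_lt_mul_of_pos_right (by linarith) (by positivity)
    have h4 : (K+1) * (ε/(4*(K+1))) = ε/4 := by field_simp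
    linarith
  calc dist (Sc hmono hmax s y) (Sc hmono hmax t y)
      ≤ dist (Sc hmono hmax s y) (Sc hmono hmax s x)
        + dist (Sc hmono hmax s x) (Sc hmono hmax t x)
        + dist (Sc hmono hmax t x) (Sc hmono hmax t y) := dist_triangle4 _ _ _ _
    _ < ε := by
        have h5 := hcon s hs
        have h7 : dist y x < ε/4 := hyx
        have h8 : dist (Sc hmono hmax t x) (Sc hmono hmax t y) ≤ dist y x := by
          rw [dist_comm]; exact hcon t ht
        linarith [hlip, hmid]

lemma Tn_integral (n : ℕ) {x : L} (t : ℝ) :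
    ∫ s in (0:ℝ)..t, -(Tn hmono hmax n s (An hmono hmax n x))
      = Tn hmono hmax n t x - x := by
  have hderiv : ∀ s ∈ uIcc (0:ℝ) t,
      HasDerivAt (fun r => Tn hmono hmax n r x) (-(Tn hmono hmax n s (An hmono hmax n x))) s := by
    intro s _
    have h := hasDerivAt_Sl hmono hmax (ln_pos n) s x
    rwa [Ay_Sl_comm hmono hmax (ln_pos n) s x] at h
  have hint : IntervalIntegrable (fun s => -(Tn hmono hmax n s (An hmono hmax n x)))
      MeasureTheory.volume 0 t :=
    ((Sl_continuous hmono hmax (ln_pos n) (An hmono hmax n x)).neg).intervalIntegrable 0 t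
  have := intervalIntegral.integral_eq_sub_of_hasDerivAt hderiv hint
  rw [this]
  congr 1
  rw [Tn, Sl_zero hmono hmax (ln_pos n), ContinuousLinearMap.one_apply]

lemma Sc_integral {x : L} (hx : x ∈ D) {t : ℝ} (ht : 0 ≤ t) :
    (∫ s in (0:ℝ)..t, Sc hmono hmax s (A ⟨x, hx⟩)) = x - Sc hmono hmax t x := by
  have h2 : Tendsto (fun n => ∫ s in (0:ℝ)..t, -(Tn hmono hmax n s (An hmono hmax n x)))
      atTop (𝓝 (∫ s in (0:ℝ)..t, -(Sc hmono hmax s (A ⟨x, hx⟩)))) := by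
    apply intervalIntegral.tendsto_integral_filter_of_dominated_convergence
      (bound := fun _ => ‖A ⟨x, hx⟩‖)
    · exact Filter.Eventually.of_forall fun n =>
        ((Sl_continuous hmono hmax (ln_pos n) (An hmono hmax n x)).neg).aestronglyMeasurable
    · refine Filter.Eventually.of_forall fun n => MeasureTheory.ae_of_all _ fun s hs => ?_
      rw [uIoc_of_le ht] at hs
      have hs0 : 0 ≤ s := hs.1.le
      rw [norm_neg]
      exact (Sl_contract hmono hmax (ln_pos n) hs0 _).trans
        (Ay_norm_of_mem hmono hmax (ln_pos n) hx)
    · exact intervalIntegrable_const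
    · refine MeasureTheory.ae_of_all _ fun s hs => ?_
      rw [uIoc_of_le ht] at hs
      have hs0 : 0 ≤ s := hs.1.le
      exact (tendsto_T_apply_var hmono hmax hs0 (an_tendsto hmono hmax hx)).neg
  have h3 : Tendsto (fun n => Tn hmono hmax n t x - x) atTop
      (𝓝 (Sc hmono hmax t x - x)) :=
    (tendsto_Sc hmono hmax ht x).sub tendsto_const_nhds
  have heq : (fun n => ∫ s in (0:ℝ)..t, -(Tn hmono hmax n s (An hmono hmax n x)))
      = fun n => Tn hmono hmax n t x - x := funext fun n => Tn_integral hmono hmax n t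
  rw [heq] at h2
  have h4 : (∫ s in (0:ℝ)..t, -(Sc hmono hmax s (A ⟨x, hx⟩))) = Sc hmono hmax t x - x :=
    tendsto_nhds_unique h2 h3
  rw [intervalIntegral.integral_neg] at h4
  rw [← neg_neg (∫ s in (0:ℝ)..t, Sc hmono hmax s (A ⟨x, hx⟩)), h4]
  abel

lemma Sc_hasDerivWithinAt {x : L} (hx : x ∈ D) {t : ℝ} (ht : 0 ≤ t) :
    HasDerivWithinAt (fun s => Sc hmono hmax s x) (-(Sc hmono hmax t (A ⟨x, hx⟩)))
      (Ici 0) t := by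
  set g : ℝ → L := fun s => Sc hmono hmax s (A ⟨x, hx⟩) with hg
  have gcont : ContinuousOn g (Ici 0) := Sc_cont hmono hmax _
  have hint : IntervalIntegrable g MeasureTheory.volume 0 t := by
    apply ContinuousOn.intervalIntegrable
    apply gcont.mono
    rw [uIcc_of_le ht]
    exact Icc_subset_Ici_self
  have hFTC : HasDerivWithinAt (fun τ => ∫ s in (0:ℝ)..τ, g s) (g t) (Ici 0) t := by
    rcases eq_or_lt_of_le ht with h0 | hpos
    · subst h0
      exact intervalIntegral.integral_hasDerivWithinAt_right (t := Ioi (0:ℝ)) hint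
        ((gcont.mono Ioi_subset_Ici_self).stronglyMeasurableAtFilter_nhdsWithin
          measurableSet_Ioi 0)
        ((gcont 0 self_mem_Ici).mono Ioi_subset_Ici_self)
    · have hcAts : ∀ τ ∈ Ioi (0:ℝ), ContinuousAt g τ :=
        fun τ hτ => (gcont τ (show (0:ℝ) < τ from hτ).le).continuousAt (Ici_mem_nhds hτ)
      exact (intervalIntegral.integral_hasDerivAt_right hint
        (ContinuousAt.stronglyMeasurableAtFilter isOpen_Ioi hcAts t hpos)
        (hcAts t hpos)).hasDerivWithinAt
  have H : HasDerivWithinAt (fun τ => x - ∫ s in (0:ℝ)..τ, g s) (-(g t)) (Ici 0) t := by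
    exact hFTC.const_sub x
  refine H.congr (fun τ hτ => ?_) ?_
  · rw [Sc_integral hmono hmax hx hτ]; abel
  · rw [Sc_integral hmono hmax hx ht]; abel

include hmono in
lemma sol_unique_aux (u v : ℝ → L)
    (hmemu : ∀ t ∈ Ici (0:ℝ), u t ∈ D) (hmemv : ∀ t ∈ Ici (0:ℝ), v t ∈ D)
    (h0 : u 0 = v 0)
    (hcu : ContinuousOn u (Ici 0)) (hcv : ContinuousOn v (Ici 0))
    (u' v' : ℝ → L)
    (hu : ∀ t : ℝ, ∀ ht : t ∈ Ici (0:ℝ),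
      HasDerivWithinAt u (u' t) (Ici 0) t ∧ u' t + A ⟨u t, hmemu t ht⟩ = 0)
    (hv : ∀ t : ℝ, ∀ ht : t ∈ Ici (0:ℝ),
      HasDerivWithinAt v (v' t) (Ici 0) t ∧ v' t + A ⟨v t, hmemv t ht⟩ = 0) :
    ∀ t : ℝ, 0 ≤ t → u t = v t := by
  set φ : ℝ → ℝ := fun t => ⟪u t - v t, u t - v t⟫ with hφ
  have hφcont : ContinuousOn φ (Ici 0) := (hcu.sub hcv).inner (hcu.sub hcv)
  have hkey : ∀ t : ℝ, 0 < t → HasDerivAt φ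
      (⟪u t - v t, u' t - v' t⟫ + ⟪u' t - v' t, u t - v t⟫) t := by
    intro t htpos
    have hmem : Ici (0:ℝ) ∈ 𝓝 t := Ici_mem_nhds htpos
    have hdu : HasDerivAt u (u' t) t := ((hu t htpos.le).1).hasDerivAt hmem
    have hdv : HasDerivAt v (v' t) t := ((hv t htpos.le).1).hasDerivAt hmem
    exact HasDerivAt.inner ℝ (hdu.sub hdv) (hdu.sub hdv)
  have hanti : AntitoneOn φ (Ici 0) := by
    apply antitoneOn_of_deriv_nonpos (convex_Ici 0) hφcont
    · intro t htint
      rw [interior_Ici] at htint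
      exact ((hkey t htint).differentiableAt).differentiableWithinAt
    · intro t htint
      rw [interior_Ici] at htint
      have ht0 : (0:ℝ) ≤ t := htint.le
      rw [(hkey t htint).deriv]
      have hueq : u' t = -(A ⟨u t, hmemu t ht0⟩) := eq_neg_of_add_eq_zero_left (hu t ht0).2
      have hveq : v' t = -(A ⟨v t, hmemv t ht0⟩) := eq_neg_of_add_eq_zero_left (hv t ht0).2
      set w : D := ⟨u t, hmemu t ht0⟩ - ⟨v t, hmemv t ht0⟩ with hw
      have hwcoe : (w : L) = u t - v t := rfl
      have hdiff : u' t - v' t = -(A w) := by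
        rw [hueq, hveq, hw, map_sub]; abel
      have h1 : ⟪u' t - v' t, u t - v t⟫ = -⟪A w, (w : L)⟫ := by
        rw [hdiff, inner_neg_left, hwcoe]
      have h2 : ⟪u t - v t, u' t - v' t⟫ = -⟪A w, (w : L)⟫ := by
        rw [real_inner_comm]; exact h1
      have h3 := hmono w
      linarith
  intro t ht
  have hφt : φ t ≤ φ 0 := hanti self_mem_Ici ht ht
  have hφ0 : φ 0 = 0 := by simp [hφ, h0]
  have hnn : (0:ℝ) ≤ φ t := real_inner_self_nonneg
  have hz : ⟪u t - v t, u t - v t⟫ = 0 := le_antisymm (by rw [← hφ0]; exact hφt) hnn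
  have := inner_self_eq_zero.mp hz
  exact sub_eq_zero.mp this

end Semigroup

end HY


open Set

section HilleYosida

variable {L : Type*} [NormedAddCommGroup L] [InnerProductSpace ℝ L] [CompleteSpace L]

/-- `u` is a solution of the abstract Cauchy problem `u' + Au = 0`, `u(0) = u₀`, of class
`C¹(ℝ₊, L) ∩ C⁰(ℝ₊, Dom(A))` (the `Dom(A)`-continuity is expressed by the continuity of
`t ↦ A(u t)`, i.e. continuity for the graph norm). -/
def IsHeatSolution (D : Submodule ℝ L) (A : D →ₗ[ℝ] L) (u₀ : L) (u : ℝ → L) : Prop :=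
  u 0 = u₀ ∧
  ∃ hmem : ∀ t ∈ Ici (0:ℝ), u t ∈ D,
    ContinuousOn u (Ici 0) ∧
    ContinuousOn (fun t : Ici (0:ℝ) => A ⟨u t, hmem t t.2⟩) univ ∧
    ∃ u' : ℝ → L, ContinuousOn u' (Ici 0) ∧
      ∀ t : ℝ, ∀ ht : t ∈ Ici (0:ℝ),
        HasDerivWithinAt u (u' t) (Ici 0) t ∧ u' t + A ⟨u t, hmem t ht⟩ = 0

/-- **Hille–Yosida.** Let `A` be a maximal monotone operator on a Hilbert space `L`.  For
every `u₀ ∈ Dom(A)` the equation `u' + Au = 0`, `u(0) = u₀`, has a solution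
`u ∈ C¹(ℝ₊,L) ∩ C⁰(ℝ₊,Dom(A))`, unique on `ℝ₊`; moreover `u(t) = S(t)u₀` for a semigroup
of contractions `(S(t))_{t ≥ 0}` independent of `u₀`. -/
theorem hille_yosida
    (D : Submodule ℝ L) (A : D →ₗ[ℝ] L)
    (hmono : ∀ u : D, 0 ≤ (inner ℝ (A u) (u : L) : ℝ))
    (hmax : ∀ f : L, ∃ u : D, A u + (u : L) = f) :
    ∃ S : ℝ → L →L[ℝ] L,
      (∀ t t' : ℝ, 0 ≤ t → 0 ≤ t' → S (t + t') = (S t).comp (S t')) ∧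
      (∀ t : ℝ, 0 ≤ t → ‖S t‖ ≤ 1) ∧
      ∀ u₀ : L, u₀ ∈ D →
        ∃ u : ℝ → L, IsHeatSolution D A u₀ u ∧
          (∀ t : ℝ, 0 ≤ t → u t = S t u₀) ∧
          ∀ v : ℝ → L, IsHeatSolution D A u₀ v → ∀ t : ℝ, 0 ≤ t → v t = u t := by
  refine ⟨fun t => HY.Sc hmono hmax t, ?_, ?_, ?_⟩
  · intro t t' ht ht'
    ext y
    simp only [ContinuousLinearMap.comp_apply]
    exact HY.Sc_semigroup hmono hmax ht ht' y
  · intro t _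
    exact HY.Sc_norm hmono hmax t
  · intro u₀ hu₀
    set u : ℝ → L := fun t => HY.Sc hmono hmax t u₀ with hudef
    have hmem : ∀ t ∈ Ici (0:ℝ), u t ∈ D := fun t ht => (HY.Sc_mem hmono hmax hu₀ ht).1
    have hAu : ∀ t : ℝ, ∀ ht : t ∈ Ici (0:ℝ),
        A ⟨u t, hmem t ht⟩ = HY.Sc hmono hmax t (A ⟨u₀, hu₀⟩) := by
      intro t ht
      exact (HY.Sc_mem hmono hmax hu₀ ht).2
    have hcu : ContinuousOn u (Ici 0) := HY.Sc_cont hmono hmax u₀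
    set u' : ℝ → L := fun t => -(HY.Sc hmono hmax t (A ⟨u₀, hu₀⟩)) with hu'def
    have hc' : ContinuousOn u' (Ici 0) := (HY.Sc_cont hmono hmax (A ⟨u₀, hu₀⟩)).neg
    have hder : ∀ t : ℝ, ∀ ht : t ∈ Ici (0:ℝ),
        HasDerivWithinAt u (u' t) (Ici 0) t ∧ u' t + A ⟨u t, hmem t ht⟩ = 0 := by
      intro t ht
      constructor
      · exact HY.Sc_hasDerivWithinAt hmono hmax hu₀ ht
      · rw [hAu t ht, hu'def]
        simp
    have hsol : IsHeatSolution D A u₀ u := by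
      refine ⟨HY.Sc_zero hmono hmax u₀, hmem, hcu, ?_, u', hc', hder⟩
      have heq : (fun t : Ici (0:ℝ) => A ⟨u t, hmem t t.2⟩)
          = fun t : Ici (0:ℝ) => HY.Sc hmono hmax t (A ⟨u₀, hu₀⟩) :=
        funext fun t => hAu t t.2
      rw [heq]
      exact ((HY.Sc_cont hmono hmax (A ⟨u₀, hu₀⟩)).restrict).continuousOn
    refine ⟨u, hsol, fun t ht => rfl, ?_⟩
    intro v hv t ht
    obtain ⟨hv0, hmemv, hcv, _, v', hcv', hderv⟩ := hv
    exact HY.sol_unique_aux hmono v u hmemv hmem (hv0.trans (HY.Sc_zero hmono hmax u₀).symm)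
      hcv hcu v' u' hderv hder t ht

end HilleYosida
end

section
/- Suppose ν is a positive measure on a neighborhood of 0 in ℂᵏ with ν(ρ𝔹) ≤ Cρ² for small ρ. If f is a measurable function with |f(z)| ≤ K/log*(c‖z‖) for constants K, c > 0, where log*(x) = 1 + |log x|, then ε^{-2}∫_{ε𝔹} |f| dν → 0 as ε → 0. -/
open Filter Topology MeasureTheory Metric

/-- The log-type function `log*(x) = 1 + |log x|`. -/
noncomputable def logStar (x : ℝ) : ℝ := 1 + |Real.log x|

/-- If `ν(ρ𝔹) ≤ Cρ²` for small `ρ` and `|f(z)| ≤ K / log*(c‖z‖)` with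
`log*(x) = 1 + |log x|`, then `ε⁻² ∫_{ε𝔹} |f| dν → 0` as `ε → 0`. -/
theorem integral_log_bound_tendsto_zero {k : ℕ}
    [MeasurableSpace (EuclideanSpace ℂ (Fin k))] [BorelSpace (EuclideanSpace ℂ (Fin k))]
    (ν : Measure (EuclideanSpace ℂ (Fin k)))
    (C r₀ : ℝ) (hC : 0 < C) (hr₀ : 0 < r₀)
    (hν : ∀ ρ : ℝ, 0 < ρ → ρ ≤ r₀ →
      ν (ball (0 : EuclideanSpace ℂ (Fin k)) ρ) ≤ ENNReal.ofReal (C * ρ ^ 2))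
    (f : EuclideanSpace ℂ (Fin k) → ℝ) (hf : Measurable f)
    (K c : ℝ) (hK : 0 < K) (hc : 0 < c)
    (hbound : ∀ z, z ≠ 0 → |f z| ≤ K / logStar (c * ‖z‖)) :
    Tendsto (fun ε => ε⁻¹ ^ 2 * ∫ z in ball (0 : EuclideanSpace ℂ (Fin k)) ε, |f z| ∂ν)
      (𝓝[>] (0:ℝ)) (𝓝 0) := by
  have hlog_pos : ∀ x : ℝ, 0 < logStar x := fun x => by
    unfold logStar; positivity
  -- ν {0} = 0
  have hnull : ν {(0 : EuclideanSpace ℂ (Fin k))} = 0 := by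
    have h1 : Tendsto (fun ρ : ℝ => ENNReal.ofReal (C * ρ ^ 2)) (𝓝[>] 0) (𝓝 0) := by
      have h : Tendsto (fun ρ : ℝ => ENNReal.ofReal (C * ρ ^ 2)) (𝓝 0)
          (𝓝 (ENNReal.ofReal (C * 0 ^ 2))) :=
        ENNReal.continuous_ofReal.continuousAt.tendsto.comp
          ((continuous_const.mul (continuous_pow 2)).tendsto 0)
      simpa using h.mono_left nhdsWithin_le_nhds
    have h2 : ∀ᶠ ρ in 𝓝[>] (0:ℝ),
        ν {(0 : EuclideanSpace ℂ (Fin k))} ≤ ENNReal.ofReal (C * ρ ^ 2) := by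
      filter_upwards [Ioc_mem_nhdsGT_of_mem (by simp [hr₀] : (0:ℝ) ∈ Set.Ico 0 r₀)] with ρ hρ
      exact le_trans (measure_mono (Set.singleton_subset_iff.2 (mem_ball_self hρ.1)))
        (hν ρ hρ.1 hρ.2)
    simpa using ge_of_tendsto h1 h2
  have hae : ∀ᵐ z ∂ν, z ≠ (0 : EuclideanSpace ℂ (Fin k)) := by
    rw [ae_iff]
    simpa [Set.setOf_eq_eq_singleton] using hnull
  set δ := min r₀ (1 / c) with hδ
  have hδpos : 0 < δ := lt_min hr₀ (by positivity)
  have key : ∀ᶠ ε in 𝓝[>] (0:ℝ),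
      ε⁻¹ ^ 2 * ∫ z in ball (0 : EuclideanSpace ℂ (Fin k)) ε, |f z| ∂ν
        ≤ C * K / logStar (c * ε) := by
    filter_upwards [Ioc_mem_nhdsGT_of_mem (by simp [hδpos] : (0:ℝ) ∈ Set.Ico 0 δ)] with ε hmem
    have hε : 0 < ε := hmem.1
    have hεr : ε ≤ r₀ := hmem.2.trans (min_le_left _ _)
    have hcε : c * ε ≤ 1 := by
      have h := hmem.2.trans (min_le_right _ _)
      rw [le_div_iff₀ hc] at h
      linarith [h]
    have hνε := hν ε hε hεr
    have hfin : ν (ball (0 : EuclideanSpace ℂ (Fin k)) ε) < ⊤ :=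
      lt_of_le_of_lt hνε ENNReal.ofReal_lt_top
    have hL : 0 < logStar (c * ε) := hlog_pos _
    have hintle : ∫ z in ball (0 : EuclideanSpace ℂ (Fin k)) ε, |f z| ∂ν
        ≤ (ν (ball (0 : EuclideanSpace ℂ (Fin k)) ε)).toReal * (K / logStar (c * ε)) := by
      have hconst : ∫ _z in ball (0 : EuclideanSpace ℂ (Fin k)) ε,
          (K / logStar (c * ε)) ∂ν
          = (ν (ball (0 : EuclideanSpace ℂ (Fin k)) ε)).toReal * (K / logStar (c * ε)) := by
        rw [setIntegral_const]; simp [smul_eq_mul, Measure.real]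
      rw [← hconst]
      apply integral_mono_of_nonneg
      · exact Eventually.of_forall fun z => abs_nonneg _
      · exact integrableOn_const hfin.ne
      · filter_upwards [ae_restrict_of_ae hae, ae_restrict_mem measurableSet_ball]
          with z hz hzball
        have hz0 : 0 < ‖z‖ := norm_pos_iff.2 hz
        have hzlt : ‖z‖ < ε := by simpa using hzball
        have hlogle : Real.log (c * ‖z‖) ≤ Real.log (c * ε) :=
          Real.log_le_log (by positivity) (by nlinarith)
        have hlogε : Real.log (c * ε) ≤ 0 := Real.log_nonpos (by positivity) hcε
        have hLS : logStar (c * ε) ≤ logStar (c * ‖z‖) := by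
          unfold logStar
          rw [abs_of_nonpos hlogε, abs_of_nonpos (hlogle.trans hlogε)]
          linarith
        calc |f z| ≤ K / logStar (c * ‖z‖) := hbound z hz
          _ ≤ K / logStar (c * ε) := by
              apply div_le_div_of_nonneg_left hK.le hL hLS
    have htoReal : (ν (ball (0 : EuclideanSpace ℂ (Fin k)) ε)).toReal ≤ C * ε ^ 2 :=
      ENNReal.toReal_le_of_le_ofReal (by positivity) hνε
    calc ε⁻¹ ^ 2 * ∫ z in ball (0 : EuclideanSpace ℂ (Fin k)) ε, |f z| ∂ν
        ≤ ε⁻¹ ^ 2 * ((ν (ball (0 : EuclideanSpace ℂ (Fin k)) ε)).toReal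
            * (K / logStar (c * ε))) := by
          apply mul_le_mul_of_nonneg_left hintle (by positivity)
      _ ≤ ε⁻¹ ^ 2 * ((C * ε ^ 2) * (K / logStar (c * ε))) := by
          have : 0 ≤ K / logStar (c * ε) := by positivity
          apply mul_le_mul_of_nonneg_left (mul_le_mul_of_nonneg_right htoReal this)
            (by positivity)
      _ = C * K / logStar (c * ε) := by
          field_simp
  have h0 : ∀ᶠ ε in 𝓝[>] (0:ℝ),
      0 ≤ ε⁻¹ ^ 2 * ∫ z in ball (0 : EuclideanSpace ℂ (Fin k)) ε, |f z| ∂ν := by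
    filter_upwards [self_mem_nhdsWithin] with ε _
    have h1 : 0 ≤ ∫ z in ball (0 : EuclideanSpace ℂ (Fin k)) ε, |f z| ∂ν :=
      integral_nonneg fun z => abs_nonneg _
    positivity
  have hmap : Tendsto (fun ε : ℝ => c * ε) (𝓝[>] 0) (𝓝[>] 0) := by
    apply tendsto_nhdsWithin_of_tendsto_nhds_of_eventually_within
    · have : Tendsto (fun ε : ℝ => c * ε) (𝓝 0) (𝓝 (c * 0)) :=
        (continuous_const.mul continuous_id).tendsto 0
      simpa using this.mono_left nhdsWithin_le_nhds
    · filter_upwards [self_mem_nhdsWithin] with x hx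
      exact mul_pos hc hx
  have hlogbot : Tendsto (fun ε : ℝ => Real.log (c * ε)) (𝓝[>] 0) atBot :=
    Real.tendsto_log_nhdsGT_zero.comp hmap
  have habs : Tendsto (fun ε : ℝ => |Real.log (c * ε)|) (𝓝[>] 0) atTop :=
    tendsto_abs_atBot_atTop.comp hlogbot
  have hLS : Tendsto (fun ε : ℝ => logStar (c * ε)) (𝓝[>] 0) atTop := by
    unfold logStar
    exact tendsto_atTop_add_const_left _ 1 habs
  have hup : Tendsto (fun ε : ℝ => C * K / logStar (c * ε)) (𝓝[>] 0) (𝓝 0) := by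
    have h := hLS.inv_tendsto_atTop
    have h2 : Tendsto (fun ε : ℝ => C * K * (logStar (c * ε))⁻¹) (𝓝[>] 0)
        (𝓝 (C * K * 0)) := h.const_mul _
    simpa [div_eq_mul_inv] using h2
  exact tendsto_of_tendsto_of_tendsto_of_le_of_le' tendsto_const_nhds hup h0 key
end
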